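/- arXiv:2511.21534 — 2 statements merged into one kernel-verified Lean document; each statement's English description precedes it below -/
import Mathlib

section
/- Bias decomposition for φ₁ (Theorem 1): under consistency, positivity, and weak conditional exchangeability, with γ(a) := Y^(a) − Y^(a,0) (the natural individual spillover effect at A=a), ψ − φ₁ = Σ_{a∈{0,1}} (−1)^{1−a} Cov( Y^(a,0), ε_a ) + Σ_{a∈{0,1}} (−1)^{1−a} Cov( γ(a), ε_a ). (Each covariance equals the paper's product of the corresponding correlation ρ and standard deviations σ.) -/
open MeasureTheory ProbabilityTheory Set

/-- The indicator function of a set, as a real-valued random variable. -/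
noncomputable def ind {Ω : Type*} (s : Set Ω) : Ω → ℝ := s.indicator fun _ => 1

/-- The covariance of two real random variables, `Cov(f,g) = E[f·g] − E[f]·E[g]`. -/
noncomputable def cov {Ω : Type*} {m : MeasurableSpace Ω} (μ : MeasureTheory.Measure Ω)
    (f g : Ω → ℝ) : ℝ :=
  (∫ ω, f ω * g ω ∂μ) - (∫ ω, f ω ∂μ) * ∫ ω, g ω ∂μ

/-!
By consistency, `1{A=a}·Y = 1{A=a}·Y^(a)`. Since `1/e_a` is `𝓕`-measurable, it can be pulled
out of a conditional expectation given `𝓕`, and exchangeability factorises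
`E[1{A=a}·Y^(a) | 𝓕] = π_a·E[Y^(a) | 𝓕]`; hence `E[1{A=a}·Y/e_a] = E[ε_a·Y^(a)]`. Conditioning on
`𝓖` instead shows `E[ε_a] = 1`, so `E[1{A=a}·Y/e_a] − E[Y^(a)] = Cov(Y^(a), ε_a)`, and
`Y^(a) = Y^(a,0) + γ(a)` splits this covariance into the two terms of the decomposition.

The factorisation is read off the regular conditional probability given `𝓕`: almost all of its
fibres make `Y^(a)` and `{A = a}` independent, because both σ-algebras involved are generated by
countable π-systems.
-/

theorem ProbabilityTheory.Kernel.Indep.ae_indep {α Ω : Type*} {mα : MeasurableSpace α}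
    {m₁ m₂ mΩ : MeasurableSpace Ω} {κ : Kernel α Ω} [IsMarkovKernel κ]
    {ν : Measure α} {p₁ p₂ : Set (Set Ω)} (hp₁ : p₁.Countable) (hp₂ : p₂.Countable)
    (hπ₁ : IsPiSystem p₁) (hπ₂ : IsPiSystem p₂)
    (hm₁ : m₁ = MeasurableSpace.generateFrom p₁) (hm₂ : m₂ = MeasurableSpace.generateFrom p₂)
    (h₁ : m₁ ≤ mΩ) (h₂ : m₂ ≤ mΩ) (h : Kernel.Indep m₁ m₂ κ ν) :
    ∀ᵐ a ∂ν, ProbabilityTheory.Indep m₁ m₂ (κ a) := by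
  have hsets : ∀ᵐ a ∂ν, ∀ s ∈ p₁, ∀ t ∈ p₂, κ a (s ∩ t) = κ a s * κ a t := by
    rw [ae_ball_iff hp₁]
    intro s hs
    rw [ae_ball_iff hp₂]
    intro t ht
    exact h s t (hm₁ ▸ MeasurableSpace.measurableSet_generateFrom hs)
      (hm₂ ▸ MeasurableSpace.measurableSet_generateFrom ht)
  filter_upwards [hsets] with a ha
  exact ProbabilityTheory.IndepSets.indep h₁ h₂ hπ₁ hπ₂ hm₁ hm₂
    ((IndepSets_iff _ _ _).2 fun s t hs ht => ha s hs t ht)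

lemma comap_real_eq_generateFrom_Iic_rat {Ω : Type*} (X : Ω → ℝ) :
    MeasurableSpace.comap X inferInstance
      = MeasurableSpace.generateFrom (preimage X '' ⋃ q : ℚ, {Iic (q : ℝ)}) := by
  rw [← MeasurableSpace.comap_generateFrom, ← Real.borel_eq_generateFrom_Iic_rat]
  rfl

lemma ind_mul_eq_indicator {Ω : Type*} (S : Set Ω) (X : Ω → ℝ) :
    (fun ω => ind S ω * X ω) = S.indicator X := by
  ext ω
  by_cases h : ω ∈ S <;> simp [ind, h]

section Sums

variable {Ω ι : Type*} {mΩ : MeasurableSpace Ω} {μ : Measure Ω} (s : Finset ι) {S : ι → Set Ω}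
  {X : ι → Ω → ℝ}

lemma measurable_sum_ind_mul (hS : ∀ i ∈ s, MeasurableSet (S i))
    (hX : ∀ i ∈ s, Measurable (X i)) : Measurable fun ω => ∑ i ∈ s, ind (S i) ω * X i ω :=
  Finset.measurable_sum _ fun i hi => (measurable_const.indicator (hS i hi)).mul (hX i hi)

lemma integrable_sum_ind_mul (hS : ∀ i ∈ s, MeasurableSet (S i))
    (hX : ∀ i ∈ s, Integrable (X i) μ) : Integrable (fun ω => ∑ i ∈ s, ind (S i) ω * X i ω) μ :=
  integrable_finsetSum _ fun i hi => by
    rw [ind_mul_eq_indicator]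
    exact (hX i hi).indicator (hS i hi)

end Sums

lemma cov_add_cov_sub {Ω : Type*} {mΩ : MeasurableSpace Ω} {μ : Measure Ω} {f g h : Ω → ℝ}
    (hf : Integrable f μ) (hg : Integrable g μ) (hfh : Integrable (fun ω => f ω * h ω) μ)
    (hgh : Integrable (fun ω => g ω * h ω) μ) :
    cov μ f h + cov μ (fun ω => g ω - f ω) h = cov μ g h := by
  simp only [cov, sub_mul]
  rw [integral_sub hgh hfh, integral_sub hg hf]
  ring

lemma integral_mul_condExp {Ω : Type*} {m mΩ : MeasurableSpace Ω} {μ : Measure Ω} (hm : m ≤ mΩ)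
    [SigmaFinite (μ.trim hm)] {w f : Ω → ℝ} (hw : StronglyMeasurable[m] w)
    (hf : Integrable f μ) (hwf : Integrable (fun ω => w ω * f ω) μ) :
    ∫ ω, w ω * μ[f | m] ω ∂μ = ∫ ω, w ω * f ω ∂μ :=
  (integral_congr_ae (condExp_mul_of_stronglyMeasurable_left hw hwf hf).symm).trans
    (integral_condExp hm)

lemma integral_condExp_div_condExp_eq_one {Ω : Type*} {mG mF mΩ : MeasurableSpace Ω}
    {μ : Measure Ω} [IsProbabilityMeasure μ] (hGF : mG ≤ mF) (hF : mF ≤ mΩ) {f : Ω → ℝ}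
    (hpos : ∀ᵐ ω ∂μ, μ[f | mG] ω ≠ 0)
    (hint : Integrable (fun ω => μ[f | mF] ω / μ[f | mG] ω) μ) :
    ∫ ω, μ[f | mF] ω / μ[f | mG] ω ∂μ = 1 := by
  have hinv : StronglyMeasurable[mG] fun ω => (μ[f | mG] ω)⁻¹ :=
    (stronglyMeasurable_condExp (m := mG) (f := f) (μ := μ)).measurable.inv.stronglyMeasurable
  simp_rw [div_eq_inv_mul] at hint ⊢
  rw [← integral_mul_condExp (hGF.trans hF) hinv integrable_condExp hint]
  calc ∫ ω, (μ[f | mG] ω)⁻¹ * μ[μ[f | mF] | mG] ω ∂μ = ∫ _, (1 : ℝ) ∂μ := by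
        refine integral_congr_ae ?_
        filter_upwards [condExp_condExp_of_le (f := f) hGF hF, hpos] with ω htower hω
        rw [htower, inv_mul_cancel₀ hω]
    _ = 1 := by simp

section CondExp

variable {Ω : Type*} {mG mF : MeasurableSpace Ω} [mΩ : MeasurableSpace Ω] [StandardBorelSpace Ω]
  {μ : Measure Ω} [IsFiniteMeasure μ]

lemma condExp_ind_mul_of_condIndep (hF : mF ≤ mΩ) {X : Ω → ℝ} {S : Set Ω}
    (hX : Measurable X) (hXint : Integrable X μ) (hS : MeasurableSet S)
    (h : CondIndep mF (MeasurableSpace.comap X inferInstance) (MeasurableSpace.generateFrom {S})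
      hF μ) :
    μ[fun ω => ind S ω * X ω | mF] =ᵐ[μ] fun ω => μ[ind S | mF] ω * μ[X | mF] ω := by
  set κ := condExpKernel μ mF
  have hindep : ∀ᵐ ω ∂μ,
      Indep (MeasurableSpace.comap X inferInstance) (MeasurableSpace.generateFrom {S}) (κ ω) :=
    ae_of_ae_trim hF <| Kernel.Indep.ae_indep
      ((countable_iUnion fun _ => countable_singleton _).image _) (countable_singleton S)
      (Real.isPiSystem_Iic_rat.comap X) (IsPiSystem.singleton S)
      (comap_real_eq_generateFrom_Iic_rat X) rfl hX.comap_le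
      (MeasurableSpace.generateFrom_singleton_le hS) h
  have hSint : Integrable (ind S) μ := (integrable_const 1).indicator hS
  have hSXint : Integrable (fun ω => ind S ω * X ω) μ := by
    rw [ind_mul_eq_indicator]
    exact hXint.indicator hS
  filter_upwards [condExp_ae_eq_integral_condExpKernel hF hSXint,
    condExp_ae_eq_integral_condExpKernel hF hSint, condExp_ae_eq_integral_condExpKernel hF hXint,
    hindep, hXint.condExpKernel_ae] with ω hSX hS' hX' hω hXω
  rw [hSX, hS', hX']
  have hfun : IndepFun (ind S) X (κ ω) := (IndepFun_iff_Indep _ _ _).2 <|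
    indep_of_indep_of_le_left hω.symm
      (MeasurableSpace.comap_indicator_const_le_generateFrom_singleton S 1)
  exact hfun.integral_mul_eq_mul_integral
    ((integrable_const 1).indicator hS).aestronglyMeasurable hXω.aestronglyMeasurable

variable {β : Type*} [MeasurableSpace β] [MeasurableSingletonClass β] {X : Ω → ℝ} {A : Ω → β}

lemma condExp_ind_mul_of_condIndepFun (hF : mF ≤ mΩ) (hX : Measurable X)
    (hXint : Integrable X μ) (hA : Measurable A) (h : CondIndepFun mF hF X A μ) (a : β) :
    μ[fun ω => ind {ω | A ω = a} ω * X ω | mF]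
      =ᵐ[μ] fun ω => μ[ind {ω | A ω = a} | mF] ω * μ[X | mF] ω :=
  condExp_ind_mul_of_condIndep hF hX hXint (hA (measurableSet_singleton a)) <|
    condIndep_of_condIndep_of_le_right ((condIndepFun_iff_condIndep _ _ X A μ).1 h)
      (MeasurableSpace.generateFrom_singleton_le ⟨{a}, measurableSet_singleton a, rfl⟩)

lemma integral_ind_mul_div_condExp_of_condIndepFun (hGF : mG ≤ mF)
    (hF : mF ≤ mΩ) (hX : Measurable X) (hXint : Integrable X μ) (hA : Measurable A)
    (h : CondIndepFun mF hF X A μ) (a : β)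
    (hint : Integrable (fun ω => ind {ω | A ω = a} ω * X ω / μ[ind {ω | A ω = a} | mG] ω) μ)
    (hXεint : Integrable (fun ω =>
      X ω * (μ[ind {ω | A ω = a} | mF] ω / μ[ind {ω | A ω = a} | mG] ω)) μ) :
    ∫ ω, ind {ω | A ω = a} ω * X ω / μ[ind {ω | A ω = a} | mG] ω ∂μ
      = ∫ ω, X ω * (μ[ind {ω | A ω = a} | mF] ω / μ[ind {ω | A ω = a} | mG] ω) ∂μ := by
  set S := {ω | A ω = a}
  set w := fun ω => (μ[ind S | mG] ω)⁻¹
  have hw : StronglyMeasurable[mF] w :=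
    (stronglyMeasurable_condExp.measurable.inv.stronglyMeasurable).mono hGF
  have hSXint : Integrable (fun ω => ind S ω * X ω) μ := by
    rw [ind_mul_eq_indicator]
    exact hXint.indicator (hA (measurableSet_singleton a))
  calc ∫ ω, ind S ω * X ω / μ[ind S | mG] ω ∂μ = ∫ ω, w ω * (ind S ω * X ω) ∂μ := by
        simp_rw [w, div_eq_inv_mul]
    _ = ∫ ω, w ω * μ[fun ω => ind S ω * X ω | mF] ω ∂μ :=
        (integral_mul_condExp hF hw hSXint (by simpa only [w, div_eq_inv_mul] using hint)).symm
    _ = ∫ ω, (w ω * μ[ind S | mF] ω) * μ[X | mF] ω ∂μ := by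
        refine integral_congr_ae ?_
        filter_upwards [condExp_ind_mul_of_condIndepFun hF hX hXint hA h a] with ω hω
        rw [hω, mul_assoc]
    _ = ∫ ω, (w ω * μ[ind S | mF] ω) * X ω ∂μ :=
        integral_mul_condExp hF (hw.mul stronglyMeasurable_condExp) hXint
          (by simpa only [w, div_eq_inv_mul, mul_comm] using hXεint)
    _ = ∫ ω, X ω * (μ[ind S | mF] ω / μ[ind S | mG] ω) ∂μ := by
        simp_rw [w, div_eq_inv_mul, mul_comm]

end CondExp

lemma integral_ind_mul_div_sub_integral_eq_cov {Ω β : Type*} {mG mF : MeasurableSpace Ω}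
    [mΩ : MeasurableSpace Ω] [StandardBorelSpace Ω] {μ : Measure Ω} [IsProbabilityMeasure μ]
    [MeasurableSpace β] [MeasurableSingletonClass β] {X : Ω → ℝ} {A : Ω → β}
    (hGF : mG ≤ mF) (hF : mF ≤ mΩ) (hX : Measurable X) (hXint : Integrable X μ)
    (hA : Measurable A) (h : CondIndepFun mF hF X A μ) (a : β) {π e ε : Ω → ℝ}
    (hπ : π = μ[ind {ω | A ω = a} | mF]) (he : e = μ[ind {ω | A ω = a} | mG])
    (hε : ∀ ω, ε ω = π ω / e ω) (hepos : ∀ᵐ ω ∂μ, 0 < e ω) (hεint : Integrable ε μ)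
    (hXεint : Integrable (fun ω => X ω * ε ω) μ)
    (hint : Integrable (fun ω => ind {ω | A ω = a} ω * X ω / e ω) μ) :
    (∫ ω, ind {ω | A ω = a} ω * X ω / e ω ∂μ) - ∫ ω, X ω ∂μ = cov μ X ε := by
  obtain rfl : ε = fun ω => π ω / e ω := funext hε
  subst hπ he
  rw [cov, integral_condExp_div_condExp_eq_one hGF hF (hepos.mono fun _ h => h.ne') hεint,
    integral_ind_mul_div_condExp_of_condIndepFun hGF hF hX hXint hA h a hint hXεint, mul_one]

lemma ind_mul_eq_ind_mul_of_consistency {Ω : Type*} {A : Ω → ℕ} {Ya : ℕ → Ω → ℝ} {Y : Ω → ℝ}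
    (hY : ∀ ω, Y ω = ind {ω' | A ω' = 1} ω * Ya 1 ω + ind {ω' | A ω' = 0} ω * Ya 0 ω)
    {a : ℕ} (ha : a ≤ 1) (ω : Ω) :
    ind {ω' | A ω' = a} ω * Y ω = ind {ω' | A ω' = a} ω * Ya a ω := by
  rcases Nat.le_one_iff_eq_zero_or_eq_one.1 ha with rfl | rfl <;>
    by_cases h₀ : A ω = 0 <;> by_cases h₁ : A ω = 1 <;> simp_all [ind]

theorem bias_decomposition_phi1_general
    {Ω : Type*} [mΩ : MeasurableSpace Ω] [StandardBorelSpace Ω]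
    (μ : Measure Ω) [IsProbabilityMeasure μ]
    (gmax : ℕ)
    (A G : Ω → ℕ)
    (hAmeas : Measurable A) (hGmeas : Measurable G)
    (Ypo : ℕ → ℕ → Ω → ℝ)
    (hYpomeas : ∀ a ≤ 1, ∀ g ≤ gmax, Measurable (Ypo a g))
    (hYposq : ∀ a ≤ 1, ∀ g ≤ gmax, MemLp (Ypo a g) 2 μ)
    (Ya : ℕ → Ω → ℝ)
    (hYa : ∀ a ω, Ya a ω = ∑ g ∈ Finset.range (gmax + 1), ind {ω' | G ω' = g} ω * Ypo a g ω)
    (Y : Ω → ℝ)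
    (hY : ∀ ω, Y ω = ind {ω' | A ω' = 1} ω * Ya 1 ω + ind {ω' | A ω' = 0} ω * Ya 0 ω)
    (mG mF : MeasurableSpace Ω) (hGF : mG ≤ mF) (hF : mF ≤ mΩ)
    (π e ε : ℕ → Ω → ℝ)
    (hπ : ∀ a, π a = μ[ind {ω | A ω = a} | mF])
    (he : ∀ a, e a = μ[ind {ω | A ω = a} | mG])
    (hepos : ∀ a ≤ 1, ∀ᵐ ω ∂μ, 0 < e a ω)
    (hexch : ∀ a ≤ 1, CondIndepFun mF hF (Ya a) A μ)
    (hε : ∀ a ω, ε a ω = π a ω / e a ω)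
    (hεint : ∀ a ≤ 1, Integrable (ε a) μ)
    (hεYint : ∀ a ≤ 1, Integrable (fun ω => Ya a ω * ε a ω) μ)
    (hεY0int : ∀ a ≤ 1, Integrable (fun ω => Ypo a 0 ω * ε a ω) μ)
    (hwint : ∀ a ≤ 1, Integrable (fun ω => ind {ω' | A ω' = a} ω * Y ω / e a ω) μ) :
    ((∫ ω, ind {ω' | A ω' = 1} ω * Y ω / e 1 ω ∂μ)
        - ∫ ω, ind {ω' | A ω' = 0} ω * Y ω / e 0 ω ∂μ)
      - ∫ ω, (Ya 1 ω - Ya 0 ω) ∂μ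
    = (∑ a ∈ Finset.range 2, (-1 : ℝ) ^ (1 - a) * cov μ (Ypo a 0) (ε a))
      + ∑ a ∈ Finset.range 2,
          (-1 : ℝ) ^ (1 - a) * cov μ (fun ω => Ya a ω - Ypo a 0 ω) (ε a) := by
  -- `mF`, the last `MeasurableSpace Ω` binder, is the default instance here: name `mΩ` explicitly.
  have hYameas : ∀ a ≤ 1, Measurable[mΩ] (Ya a) := fun a ha => by
    rw [funext (hYa a)]
    exact measurable_sum_ind_mul _ (fun g _ => hGmeas (measurableSet_singleton g))
      fun g hg => hYpomeas a ha g (Nat.lt_succ_iff.1 (Finset.mem_range.1 hg))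
  have hYaint : ∀ a ≤ 1, Integrable (Ya a) μ := fun a ha => by
    rw [funext (hYa a)]
    exact integrable_sum_ind_mul _ (fun g _ => hGmeas (measurableSet_singleton g))
      fun g hg => (hYposq a ha g (Nat.lt_succ_iff.1 (Finset.mem_range.1 hg))).integrable one_le_two
  have hbias_arm : ∀ a ≤ 1, (∫ ω, ind {ω' | A ω' = a} ω * Y ω / e a ω ∂μ) - ∫ ω, Ya a ω ∂μ
      = cov μ (Ypo a 0) (ε a) + cov μ (fun ω => Ya a ω - Ypo a 0 ω) (ε a) := by
    intro a ha
    have hw := hwint a ha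
    simp_rw [ind_mul_eq_ind_mul_of_consistency hY ha] at hw ⊢
    rw [cov_add_cov_sub ((hYposq a ha 0 (Nat.zero_le _)).integrable one_le_two) (hYaint a ha)
      (hεY0int a ha) (hεYint a ha)]
    exact integral_ind_mul_div_sub_integral_eq_cov (mΩ := mΩ) hGF hF (hYameas a ha) (hYaint a ha)
      hAmeas (hexch a ha) a (hπ a) (he a) (hε a) (hepos a ha) (hεint a ha) (hεYint a ha) hw
  rw [integral_sub (hYaint 1 le_rfl) (hYaint 0 zero_le_one)]
  simp only [Finset.sum_range_succ, Finset.sum_range_zero, zero_add, Nat.sub_zero, Nat.sub_self,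
    pow_one, pow_zero, one_mul, neg_one_mul]
  linarith [hbias_arm 0 zero_le_one, hbias_arm 1 le_rfl]

/-- **Bias decomposition for φ₁ (Theorem 1).**  In the reference population, under
consistency, positivity, and weak conditional exchangeability, with
`γ(a) = Y^(a) − Y^(a,0)` the natural individual spillover effect at `A = a`,
`ψ − φ₁ = Σ_{a∈{0,1}} (−1)^{1−a} Cov(Y^(a,0), ε_a) + Σ_{a∈{0,1}} (−1)^{1−a} Cov(γ(a), ε_a)`,
where `ε_a = π_a / e_a` is the MEW score, `ψ = E[1{A=1}Y/e₁] − E[1{A=0}Y/e₀]` the naive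
functional and `φ₁ = E[Y^(1) − Y^(0)]` the natural average main effect. -/
theorem bias_decomposition_phi1
    {Ω : Type*} [mΩ : MeasurableSpace Ω] [StandardBorelSpace Ω] [Nonempty Ω]
    (μ : Measure Ω) [IsProbabilityMeasure μ]
    (gmax : ℕ)
    (A G : Ω → ℕ) (hA : ∀ ω, A ω ≤ 1) (hG : ∀ ω, G ω ≤ gmax)
    (hAmeas : Measurable A) (hGmeas : Measurable G)
    (Ypo : ℕ → ℕ → Ω → ℝ)
    (hYpomeas : ∀ a ≤ 1, ∀ g ≤ gmax, Measurable (Ypo a g))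
    (hYposq : ∀ a ≤ 1, ∀ g ≤ gmax, MemLp (Ypo a g) 2 μ)
    (Ya : ℕ → Ω → ℝ)
    (hYa : ∀ a ω, Ya a ω = ∑ g ∈ Finset.range (gmax + 1), ind {ω' | G ω' = g} ω * Ypo a g ω)
    (Y : Ω → ℝ)
    (hY : ∀ ω, Y ω = ind {ω' | A ω' = 1} ω * Ya 1 ω + ind {ω' | A ω' = 0} ω * Ya 0 ω)
    (mG mF : MeasurableSpace Ω) (hGF : mG ≤ mF) (hF : mF ≤ mΩ)
    (π e ε : ℕ → Ω → ℝ)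
    (hπ : ∀ a, π a = μ[ind {ω | A ω = a} | mF])
    (he : ∀ a, e a = μ[ind {ω | A ω = a} | mG])
    (hπpos : ∀ a ≤ 1, ∀ᵐ ω ∂μ, 0 < π a ω)
    (hepos : ∀ a ≤ 1, ∀ᵐ ω ∂μ, 0 < e a ω)
    (hexch : ∀ a ≤ 1, CondIndepFun mF hF (Ya a) A μ)
    (hε : ∀ a ω, ε a ω = π a ω / e a ω)
    (hεint : ∀ a ≤ 1, Integrable (ε a) μ)
    (hεYint : ∀ a ≤ 1, Integrable (fun ω => Ya a ω * ε a ω) μ)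
    (hεY0int : ∀ a ≤ 1, Integrable (fun ω => Ypo a 0 ω * ε a ω) μ)
    (hwint : ∀ a ≤ 1, Integrable (fun ω => ind {ω' | A ω' = a} ω * Y ω / e a ω) μ) :
    ((∫ ω, ind {ω' | A ω' = 1} ω * Y ω / e 1 ω ∂μ)
        - ∫ ω, ind {ω' | A ω' = 0} ω * Y ω / e 0 ω ∂μ)
      - ∫ ω, (Ya 1 ω - Ya 0 ω) ∂μ
    = (∑ a ∈ Finset.range 2, (-1 : ℝ) ^ (1 - a) * cov μ (Ypo a 0) (ε a))
      + ∑ a ∈ Finset.range 2,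
          (-1 : ℝ) ^ (1 - a) * cov μ (fun ω => Ya a ω - Ypo a 0 ω) (ε a) :=
  bias_decomposition_phi1_general (mΩ := mΩ) μ gmax A G hAmeas hGmeas Ypo hYpomeas hYposq Ya hYa Y
    hY mG mF hGF hF π e ε hπ he hepos hexch hε hεint hεYint hεY0int hwint
end

section
/- Bias decomposition for φ₂ (Theorem 2): ψ − φ₂ = (ψ − φ₁) + T₃, where T₃ := Σ_{g=0}^{g_max} [ Cov( τ(g), υ(g) ) + E[τ(g)] · ( P(G=g|S=1) − P(G=g|S=2) ) ], υ(g) := P(G=g|S=1,𝓗) − P(G=g|S=2,𝓗), and the covariance and expectation in T₃ are taken unconditionally (over both populations). In particular φ₁ − φ₂ = T₃. -/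
/-!
Expanding `Y^(a)` over the strata of `G` gives `φ_s = Σ_g E[1{G=g} τ(g) | S=s]`. Since
`Y^(a,g)` is conditionally independent of `(S,G)` given `𝓗`, the indicator of `{S=s, G=g}` may
be replaced by its conditional expectation given `𝓗`, and because `S` is independent of `𝓗`
that conditional expectation is `P(S=s) · P(G=g | S=s, 𝓗)`. Hence
`φ_s = Σ_g E[τ(g) · P(G=g | S=s, 𝓗)]` with an unconditional expectation. Subtracting the two
populations and splitting `E[τ υ] = Cov(τ, υ) + E[τ] E[υ]` gives `φ₁ − φ₂ = T₃`, where again by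
independence of `S` and `𝓗` the mean of `P(G=g | S=s, 𝓗)` is `P(G=g | S=s)`. The decomposition
of `ψ − φ₂` is a rearrangement of this identity.
-/

open MeasureTheory ProbabilityTheory Set

section Indicator

variable {Ω : Type*} {mΩ : MeasurableSpace Ω} {μ : Measure Ω}

lemma abs_ind_le_one (s : Set Ω) (ω : Ω) : |ind s ω| ≤ 1 := by
  by_cases h : ω ∈ s <;> simp [ind, h]

lemma ind_mul_apply (s : Set Ω) (f : Ω → ℝ) (ω : Ω) : ind s ω * f ω = s.indicator f ω := by
  by_cases h : ω ∈ s <;> simp [ind, h]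

lemma ind_inter (s t : Set Ω) : ind (s ∩ t) = ind s * ind t :=
  Set.inter_indicator_one

lemma integrable_ind [IsFiniteMeasure μ] {s : Set Ω} (hs : MeasurableSet s) :
    Integrable (ind s) μ :=
  (integrable_const 1).indicator hs

lemma integral_ind {s : Set Ω} (hs : MeasurableSet s) : ∫ ω, ind s ω ∂μ = μ.real s :=
  integral_indicator_one hs

lemma setIntegral_ind {s : Set Ω} (hs : MeasurableSet s) (C : Set Ω) :
    ∫ ω in C, ind s ω ∂μ = μ.real (s ∩ C) := by
  rw [integral_ind hs, measureReal_restrict_apply hs]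

lemma ae_abs_condExp_ind_le_one {m : MeasurableSpace Ω} (s : Set Ω) :
    ∀ᵐ ω ∂μ, |μ[ind s|m] ω| ≤ 1 :=
  ae_bdd_abs_condExp_of_ae_bdd_abs (ae_of_all μ (abs_ind_le_one s))

lemma integrable_mul_condExp_ind {m : MeasurableSpace Ω} (hm : m ≤ mΩ) {X : Ω → ℝ}
    (hX : Integrable X μ) (s : Set Ω) : Integrable (fun ω => X ω * μ[ind s|m] ω) μ :=
  hX.mul_bdd (stronglyMeasurable_condExp.mono hm).aestronglyMeasurable
    (ae_abs_condExp_ind_le_one s)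

end Indicator

section PullOut

variable {Ω : Type*} {mΩ : MeasurableSpace Ω} {μ : Measure Ω} [IsFiniteMeasure μ]

lemma integral_mul_eq_of_forall_setIntegral_eq {m : MeasurableSpace Ω} (hm : m ≤ mΩ)
    {X w v : Ω → ℝ} (hX : StronglyMeasurable[m] X) (hw : Integrable w μ) (hv : Integrable v μ)
    (hXw : Integrable (X * w) μ) (hXv : Integrable (X * v) μ)
    (hwv : ∀ s, MeasurableSet[m] s → ∫ ω in s, w ω ∂μ = ∫ ω in s, v ω ∂μ) :
    ∫ ω, X ω * w ω ∂μ = ∫ ω, X ω * v ω ∂μ := by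
  have hcond : μ[w|m] =ᵐ[μ] μ[v|m] :=
    ae_eq_condExp_of_forall_setIntegral_eq hm hv (fun _ _ _ => integrable_condExp.integrableOn)
      (fun s hs _ => by rw [setIntegral_condExp hm hw hs, hwv s hs])
      stronglyMeasurable_condExp.aestronglyMeasurable
  calc ∫ ω, X ω * w ω ∂μ = ∫ ω, μ[X * w|m] ω ∂μ := (integral_condExp hm).symm
    _ = ∫ ω, X ω * μ[v|m] ω ∂μ := integral_congr_ae <|
        (condExp_mul_of_stronglyMeasurable_left hX hXw hw).trans (hcond.mono fun ω h => by simp [h])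
    _ = ∫ ω, μ[X * v|m] ω ∂μ :=
        (integral_congr_ae (condExp_mul_of_stronglyMeasurable_left hX hXv hv)).symm
    _ = ∫ ω, X ω * v ω ∂μ := integral_condExp hm

end PullOut

section Cond

variable {Ω : Type*} {mΩ : MeasurableSpace Ω} {μ : Measure Ω} {t : Set Ω}

lemma MeasureTheory.Integrable.cond {f : Ω → ℝ} (hf : Integrable f μ) (ht : μ t ≠ 0) :
    Integrable f μ[|t] :=
  hf.restrict.smul_measure (ENNReal.inv_ne_top.mpr ht)

lemma integrable_cond_ind_mul {B : Set Ω} (hB : MeasurableSet B) {f : Ω → ℝ}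
    (hf : Integrable f μ) (ht : μ t ≠ 0) : Integrable (fun ω => ind B ω * f ω) μ[|t] :=
  (hf.cond ht).bdd_mul (integrable_ind hB).aestronglyMeasurable (ae_of_all _ (abs_ind_le_one _))

lemma integral_cond (f : Ω → ℝ) : ∫ ω, f ω ∂μ[|t] = (μ.real t)⁻¹ * ∫ ω in t, f ω ∂μ := by
  rw [ProbabilityTheory.cond, integral_smul_measure, ENNReal.toReal_inv, smul_eq_mul,
    measureReal_def]

lemma cond_real_apply (ht : MeasurableSet t) (s : Set Ω) :
    (μ[|t]).real s = (μ.real t)⁻¹ * μ.real (t ∩ s) := by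
  simp only [measureReal_def, cond_apply ht, ENNReal.toReal_mul, ENNReal.toReal_inv]

end Cond

section Indep

variable {Ω : Type*} {m₁ mH mΩ : MeasurableSpace Ω} {μ : Measure Ω} [IsFiniteMeasure μ]
  {t : Set Ω}

lemma trim_cond_eq_of_indep (hH : mH ≤ mΩ) (hind : Indep m₁ mH μ) (ht₁ : MeasurableSet[m₁] t)
    (ht : MeasurableSet t) (ht0 : μ t ≠ 0) : (μ[|t]).trim hH = μ.trim hH := by
  refine @Measure.ext _ mH _ _ fun B hB => ?_
  rw [trim_measurableSet_eq hH hB, trim_measurableSet_eq hH hB, cond_apply ht,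
    (Indep_iff _ _ _).mp hind t B ht₁ hB, ← mul_assoc,
    ENNReal.inv_mul_cancel ht0 (measure_ne_top μ t), one_mul]

lemma integral_cond_eq_of_indep (hH : mH ≤ mΩ) (hind : Indep m₁ mH μ)
    (ht₁ : MeasurableSet[m₁] t) (ht : MeasurableSet t) (ht0 : μ t ≠ 0) {f : Ω → ℝ}
    (hf : StronglyMeasurable[mH] f) : ∫ ω, f ω ∂μ[|t] = ∫ ω, f ω ∂μ := by
  rw [integral_trim hH hf, integral_trim hH hf, trim_cond_eq_of_indep hH hind ht₁ ht ht0]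

lemma integrable_condExp_cond_of_indep (hH : mH ≤ mΩ) (hind : Indep m₁ mH μ)
    (ht₁ : MeasurableSet[m₁] t) (ht : MeasurableSet t) (ht0 : μ t ≠ 0) {f : Ω → ℝ} :
    Integrable ((μ[|t])[f|mH]) μ := by
  refine integrable_of_integrable_trim hH ?_
  rw [← trim_cond_eq_of_indep hH hind ht₁ ht ht0]
  exact integrable_condExp.trim hH stronglyMeasurable_condExp

lemma condExp_ind_inter_ae_eq_of_indep (hH : mH ≤ mΩ) (hind : Indep m₁ mH μ)
    (ht₁ : MeasurableSet[m₁] t) (ht : MeasurableSet t) (ht0 : μ t ≠ 0) {B : Set Ω}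
    (hB : MeasurableSet B) :
    μ[ind (t ∩ B)|mH] =ᵐ[μ] fun ω => μ.real t * (μ[|t])[ind B|mH] ω := by
  have : IsProbabilityMeasure μ[|t] := cond_isProbabilityMeasure ht0
  have hp := integrable_condExp_cond_of_indep hH hind ht₁ ht ht0 (f := ind B)
  refine (ae_eq_condExp_of_forall_setIntegral_eq hH (integrable_ind (ht.inter hB))
    (fun _ _ _ => (hp.const_mul _).integrableOn) (fun C hC _ => ?_)
    ((stronglyMeasurable_condExp.const_mul _).aestronglyMeasurable)).symm
  have hCp : StronglyMeasurable[mH] (C.indicator ((μ[|t])[ind B|mH])) :=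
    stronglyMeasurable_condExp.indicator hC
  have hCΩ : MeasurableSet C := hH C hC
  have ht0' : μ.real t ≠ 0 := (measureReal_ne_zero_iff (measure_ne_top μ t)).mpr ht0
  rw [integral_const_mul, ← integral_indicator hCΩ,
    ← integral_cond_eq_of_indep hH hind ht₁ ht ht0 hCp, integral_indicator hCΩ,
    setIntegral_condExp hH (integrable_ind hB) hC, setIntegral_ind hB,
    setIntegral_ind (ht.inter hB), cond_real_apply ht, mul_inv_cancel_left₀ ht0', inter_assoc]

lemma integrable_mul_condExp_cond_ind_of_indep (hH : mH ≤ mΩ) (hind : Indep m₁ mH μ)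
    (ht₁ : MeasurableSet[m₁] t) (ht : MeasurableSet t) (ht0 : μ t ≠ 0) {B : Set Ω}
    (hB : MeasurableSet B) {X : Ω → ℝ} (hX : Integrable X μ) :
    Integrable (fun ω => X ω * (μ[|t])[ind B|mH] ω) μ := by
  have ht0' : μ.real t ≠ 0 := (measureReal_ne_zero_iff (measure_ne_top μ t)).mpr ht0
  refine ((integrable_mul_condExp_ind hH hX (t ∩ B)).const_mul (μ.real t)⁻¹).congr ?_
  filter_upwards [condExp_ind_inter_ae_eq_of_indep hH hind ht₁ ht ht0 hB] with ω hω
  rw [hω, mul_left_comm, inv_mul_cancel_left₀ ht0']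

lemma integral_condExp_cond_ind_of_indep (hH : mH ≤ mΩ) (hind : Indep m₁ mH μ)
    (ht₁ : MeasurableSet[m₁] t) (ht : MeasurableSet t) (ht0 : μ t ≠ 0) {B : Set Ω}
    (hB : MeasurableSet B) : ∫ ω, (μ[|t])[ind B|mH] ω ∂μ = (μ[|t]).real B := by
  have : IsProbabilityMeasure μ[|t] := cond_isProbabilityMeasure ht0
  rw [← integral_cond_eq_of_indep hH hind ht₁ ht ht0 stronglyMeasurable_condExp,
    integral_condExp hH, integral_ind hB]

end Indep

section CondIndep

variable {Ω β γ : Type*} {mH mΩ : MeasurableSpace Ω} [StandardBorelSpace Ω] {μ : Measure Ω}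
  [IsFiniteMeasure μ] [MeasurableSpace β] [MeasurableSpace γ] {hH : mH ≤ mΩ} {X : Ω → ℝ}

lemma ProbabilityTheory.CondIndepFun.integral_mul_ind_preimage {Z : Ω → β}
    (h : CondIndepFun mH hH X Z μ) (hX : Measurable X) (hXi : Integrable X μ)
    (hZ : Measurable Z) {s : Set β} (hs : MeasurableSet s) :
    ∫ ω, X ω * ind (Z ⁻¹' s) ω ∂μ = ∫ ω, X ω * μ[ind (Z ⁻¹' s)|mH] ω ∂μ := by
  have hB : MeasurableSet (Z ⁻¹' s) := hZ hs
  have hfac := (condIndepFun_iff_condExp_inter_preimage_eq_mul hX hZ).mp h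
  refine integral_mul_eq_of_forall_setIntegral_eq hX.comap_le
    (comap_measurable X).stronglyMeasurable (integrable_ind hB) integrable_condExp
    (hXi.mul_bdd (integrable_ind hB).aestronglyMeasurable (ae_of_all μ (abs_ind_le_one _)))
    (integrable_mul_condExp_ind hH hXi _) ?_
  rintro _ ⟨u, hu, rfl⟩
  have hC : MeasurableSet (X ⁻¹' u) := hX hu
  calc ∫ ω in X ⁻¹' u, ind (Z ⁻¹' s) ω ∂μ = ∫ ω, μ[ind (X ⁻¹' u ∩ Z ⁻¹' s)|mH] ω ∂μ := by
        rw [integral_condExp hH, setIntegral_ind hB, integral_ind (hC.inter hB), inter_comm]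
    _ = ∫ ω, μ[ind (X ⁻¹' u)|mH] ω * μ[ind (Z ⁻¹' s)|mH] ω ∂μ :=
        integral_congr_ae (hfac u s hu hs)
    _ = ∫ ω, μ[ind (X ⁻¹' u) * μ[ind (Z ⁻¹' s)|mH]|mH] ω ∂μ :=
        integral_congr_ae (condExp_mul_of_stronglyMeasurable_right stronglyMeasurable_condExp
          (integrable_condExp.bdd_mul (integrable_ind hC).aestronglyMeasurable
            (ae_of_all μ (abs_ind_le_one _))) (integrable_ind hC)).symm
    _ = ∫ ω in X ⁻¹' u, μ[ind (Z ⁻¹' s)|mH] ω ∂μ := by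
        rw [integral_condExp hH, ← integral_indicator hC]
        simp only [Pi.mul_apply, ind_mul_apply]

lemma ProbabilityTheory.CondIndepFun.integral_cond_ind_mul {S : Ω → β} {G : Ω → γ}
    (h : CondIndepFun mH hH X (fun ω => (S ω, G ω)) μ) (hX : Measurable X) (hXi : Integrable X μ)
    (hS : Measurable S) (hG : Measurable G)
    (hSH : Indep (MeasurableSpace.comap S inferInstance) mH μ) {s : Set β} {u : Set γ}
    (hs : MeasurableSet s) (hu : MeasurableSet u) (hs0 : μ (S ⁻¹' s) ≠ 0) :
    ∫ ω, ind (G ⁻¹' u) ω * X ω ∂μ[|S ⁻¹' s]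
      = ∫ ω, X ω * (μ[|S ⁻¹' s])[ind (G ⁻¹' u)|mH] ω ∂μ := by
  have ht0 : μ.real (S ⁻¹' s) ≠ 0 := (measureReal_ne_zero_iff (measure_ne_top μ _)).mpr hs0
  have hcond := condExp_ind_inter_ae_eq_of_indep hH hSH ⟨s, hs, rfl⟩ (hS hs) hs0 (hG hu)
  have hkey := h.integral_mul_ind_preimage hX hXi (hS.prodMk hG) (hs.prod hu)
  rw [mk_preimage_prod] at hkey
  calc ∫ ω, ind (G ⁻¹' u) ω * X ω ∂μ[|S ⁻¹' s]
      = (μ.real (S ⁻¹' s))⁻¹ * ∫ ω, X ω * ind (S ⁻¹' s ∩ G ⁻¹' u) ω ∂μ := by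
        rw [integral_cond, ← integral_indicator (hS hs)]
        congr 2 with ω
        rw [ind_inter, Pi.mul_apply, ← ind_mul_apply]
        ring
    _ = (μ.real (S ⁻¹' s))⁻¹
          * ∫ ω, X ω * (μ.real (S ⁻¹' s) * (μ[|S ⁻¹' s])[ind (G ⁻¹' u)|mH] ω) ∂μ := by
        rw [hkey, integral_congr_ae (hcond.mono fun ω hω => congrArg (X ω * ·) hω)]
    _ = ∫ ω, X ω * (μ[|S ⁻¹' s])[ind (G ⁻¹' u)|mH] ω ∂μ := by
        simp_rw [mul_left_comm (X _), integral_const_mul, inv_mul_cancel_left₀ ht0]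

end CondIndep

section Strata

variable {Ω β ι : Type*} {mH mΩ : MeasurableSpace Ω} [StandardBorelSpace Ω] {μ : Measure Ω}
  [IsFiniteMeasure μ] [MeasurableSpace β] [MeasurableSpace ι] [MeasurableSingletonClass ι]
  {hH : mH ≤ mΩ} {S : Ω → β} {G : Ω → ι} {I : Finset ι} {s : Set β}

lemma integral_cond_sum_ind_mul {Y : ι → Ω → ℝ}
    (h : ∀ i ∈ I, CondIndepFun mH hH (Y i) (fun ω => (S ω, G ω)) μ)
    (hY : ∀ i ∈ I, Measurable (Y i)) (hYi : ∀ i ∈ I, Integrable (Y i) μ) (hS : Measurable S)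
    (hG : Measurable G) (hSH : Indep (MeasurableSpace.comap S inferInstance) mH μ)
    (hs : MeasurableSet s) (hs0 : μ (S ⁻¹' s) ≠ 0) :
    ∫ ω, ∑ i ∈ I, ind (G ⁻¹' {i}) ω * Y i ω ∂μ[|S ⁻¹' s]
      = ∑ i ∈ I, ∫ ω, Y i ω * (μ[|S ⁻¹' s])[ind (G ⁻¹' {i})|mH] ω ∂μ := by
  rw [integral_finsetSum I fun i hi => integrable_cond_ind_mul (hG (measurableSet_singleton i))
    (hYi i hi) hs0]
  exact Finset.sum_congr rfl fun i hi => (h i hi).integral_cond_ind_mul (hY i hi) (hYi i hi) hS hG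
    hSH hs (measurableSet_singleton i) hs0

lemma integral_cond_sum_ind_mul_sub {Y₁ Y₀ : ι → Ω → ℝ}
    (h₁ : ∀ i ∈ I, CondIndepFun mH hH (Y₁ i) (fun ω => (S ω, G ω)) μ)
    (h₀ : ∀ i ∈ I, CondIndepFun mH hH (Y₀ i) (fun ω => (S ω, G ω)) μ)
    (hY₁ : ∀ i ∈ I, Measurable (Y₁ i)) (hY₀ : ∀ i ∈ I, Measurable (Y₀ i))
    (hY₁i : ∀ i ∈ I, Integrable (Y₁ i) μ) (hY₀i : ∀ i ∈ I, Integrable (Y₀ i) μ)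
    (hS : Measurable S) (hG : Measurable G)
    (hSH : Indep (MeasurableSpace.comap S inferInstance) mH μ) (hs : MeasurableSet s)
    (hs0 : μ (S ⁻¹' s) ≠ 0) :
    ∫ ω, (∑ i ∈ I, ind (G ⁻¹' {i}) ω * Y₁ i ω) - ∑ i ∈ I, ind (G ⁻¹' {i}) ω * Y₀ i ω ∂μ[|S ⁻¹' s]
      = ∑ i ∈ I, ∫ ω, (Y₁ i ω - Y₀ i ω) * (μ[|S ⁻¹' s])[ind (G ⁻¹' {i})|mH] ω ∂μ := by
  have hint {Y : ι → Ω → ℝ} (hYi : ∀ i ∈ I, Integrable (Y i) μ) :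
      Integrable (fun ω => ∑ i ∈ I, ind (G ⁻¹' {i}) ω * Y i ω) μ[|S ⁻¹' s] :=
    integrable_finsetSum I fun i hi =>
      integrable_cond_ind_mul (hG (measurableSet_singleton i)) (hYi i hi) hs0
  have hint_mul {Y : ι → Ω → ℝ} (hYi : ∀ i ∈ I, Integrable (Y i) μ) (i : ι) (hi : i ∈ I) :=
    integrable_mul_condExp_cond_ind_of_indep hH hSH ⟨s, hs, rfl⟩ (hS hs) hs0
      (hG (measurableSet_singleton i)) (hYi i hi)
  rw [integral_sub (hint hY₁i) (hint hY₀i),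
    integral_cond_sum_ind_mul h₁ hY₁ hY₁i hS hG hSH hs hs0,
    integral_cond_sum_ind_mul h₀ hY₀ hY₀i hS hG hSH hs hs0, ← Finset.sum_sub_distrib]
  refine Finset.sum_congr rfl fun i hi => ?_
  rw [← integral_sub (hint_mul hY₁i i hi) (hint_mul hY₀i i hi)]
  simp_rw [sub_mul]

end Strata

lemma cov_sub_add_integral_mul_integral_sub {Ω : Type*} {mΩ : MeasurableSpace Ω}
    {μ : Measure Ω} {f p q : Ω → ℝ} (hfp : Integrable (fun ω => f ω * p ω) μ)
    (hfq : Integrable (fun ω => f ω * q ω) μ) (hp : Integrable p μ) (hq : Integrable q μ) :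
    cov μ f (fun ω => p ω - q ω) + (∫ ω, f ω ∂μ) * ((∫ ω, p ω ∂μ) - ∫ ω, q ω ∂μ)
      = (∫ ω, f ω * p ω ∂μ) - ∫ ω, f ω * q ω ∂μ := by
  simp only [cov, mul_sub, integral_sub hp hq, integral_sub hfp hfq]
  ring

theorem bias_decomposition_phi2_general
    {Ω : Type*} [mΩ : MeasurableSpace Ω] [StandardBorelSpace Ω]
    (μ : Measure Ω) [IsProbabilityMeasure μ]
    (gmax : ℕ)
    (S A G : Ω → ℕ)
    (hSmeas : Measurable S)
    (hSpos : ∀ s, (s = 1 ∨ s = 2) → 0 < μ {ω | S ω = s})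
    (hGmeas : Measurable G)
    (Ypo : ℕ → ℕ → Ω → ℝ)
    (hYpomeas : ∀ a ≤ 1, ∀ g ≤ gmax, Measurable (Ypo a g))
    (hYposq : ∀ a ≤ 1, ∀ g ≤ gmax, MemLp (Ypo a g) 2 μ)
    (Ya : ℕ → Ω → ℝ)
    (hYa : ∀ a ω, Ya a ω = ∑ g ∈ Finset.range (gmax + 1), ind {ω' | G ω' = g} ω * Ypo a g ω)
    (Y : Ω → ℝ)
    -- transportability assumptions
    (mH : MeasurableSpace Ω) (hH : mH ≤ mΩ)
    (pg : ℕ → ℕ → Ω → ℝ)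
    (hpg : ∀ s g, pg s g = (μ[|{ω | S ω = s}])[ind {ω | G ω = g} | mH])
    (htrans : ∀ a ≤ 1, ∀ g ≤ gmax,
      CondIndepFun mH hH (Ypo a g) (fun ω => (S ω, G ω)) μ)
    (hSH : Indep (MeasurableSpace.comap S inferInstance) mH μ)
    -- reference-population assumptions, under P₁ = μ[|{S=1}]
    (e : ℕ → Ω → ℝ) :
    -- with ψ the naive functional, φ₁ and φ₂ the natural average main effects:
    (((∫ ω, ind {ω' | A ω' = 1} ω * Y ω / e 1 ω ∂(μ[|{ω | S ω = 1}]))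
        - ∫ ω, ind {ω' | A ω' = 0} ω * Y ω / e 0 ω ∂(μ[|{ω | S ω = 1}]))
      - ∫ ω, (Ya 1 ω - Ya 0 ω) ∂(μ[|{ω | S ω = 2}])
    = (((∫ ω, ind {ω' | A ω' = 1} ω * Y ω / e 1 ω ∂(μ[|{ω | S ω = 1}]))
        - ∫ ω, ind {ω' | A ω' = 0} ω * Y ω / e 0 ω ∂(μ[|{ω | S ω = 1}]))
      - ∫ ω, (Ya 1 ω - Ya 0 ω) ∂(μ[|{ω | S ω = 1}]))
      + ∑ g ∈ Finset.range (gmax + 1),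
          (cov μ (fun ω => Ypo 1 g ω - Ypo 0 g ω) (fun ω => pg 1 g ω - pg 2 g ω)
            + (∫ ω, (Ypo 1 g ω - Ypo 0 g ω) ∂μ)
                * (((μ[|{ω | S ω = 1}]) {ω | G ω = g}).toReal
                    - ((μ[|{ω | S ω = 2}]) {ω | G ω = g}).toReal)))
    ∧ (∫ ω, (Ya 1 ω - Ya 0 ω) ∂(μ[|{ω | S ω = 1}]))
        - ∫ ω, (Ya 1 ω - Ya 0 ω) ∂(μ[|{ω | S ω = 2}])
      = ∑ g ∈ Finset.range (gmax + 1),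
          (cov μ (fun ω => Ypo 1 g ω - Ypo 0 g ω) (fun ω => pg 1 g ω - pg 2 g ω)
            + (∫ ω, (Ypo 1 g ω - Ypo 0 g ω) ∂μ)
                * (((μ[|{ω | S ω = 1}]) {ω | G ω = g}).toReal
                    - ((μ[|{ω | S ω = 2}]) {ω | G ω = g}).toReal)) := by
  have hle {g} (hg : g ∈ Finset.range (gmax + 1)) : g ≤ gmax := Finset.mem_range_succ_iff.mp hg
  have hint a (ha : a ≤ 1) g (hg : g ∈ Finset.range (gmax + 1)) : Integrable (Ypo a g) μ :=
    (hYposq a ha g (hle hg)).integrable one_le_two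
  have hSs s : MeasurableSet[MeasurableSpace.comap S inferInstance] {ω | S ω = s} :=
    ⟨{s}, measurableSet_singleton s, rfl⟩
  have hSm s : MeasurableSet[mΩ] {ω | S ω = s} := hSmeas (measurableSet_singleton s)
  have hS0 s (hs : s = 1 ∨ s = 2) : μ {ω | S ω = s} ≠ 0 := (hSpos s hs).ne'
  have hstrat s (hs : s = 1 ∨ s = 2) : ∫ ω, (Ya 1 ω - Ya 0 ω) ∂(μ[|{ω | S ω = s}])
      = ∑ g ∈ Finset.range (gmax + 1), ∫ ω, (Ypo 1 g ω - Ypo 0 g ω) * pg s g ω ∂μ := by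
    simp only [hYa, hpg]
    exact integral_cond_sum_ind_mul_sub (s := {s}) (fun g hg => htrans 1 le_rfl g (hle hg))
      (fun g hg => htrans 0 zero_le_one g (hle hg)) (fun g hg => hYpomeas 1 le_rfl g (hle hg))
      (fun g hg => hYpomeas 0 zero_le_one g (hle hg)) (hint 1 le_rfl) (hint 0 zero_le_one)
      hSmeas hGmeas hSH (measurableSet_singleton s) (hS0 s hs)
  refine (fun h => ⟨by linarith, h⟩) ?_
  rw [hstrat 1 (.inl rfl), hstrat 2 (.inr rfl), ← Finset.sum_sub_distrib]
  refine Finset.sum_congr rfl fun g hg => ?_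
  have hτ := (hint 1 le_rfl g hg).sub (hint 0 zero_le_one g hg)
  have hG : MeasurableSet[mΩ] {ω | G ω = g} := hGmeas (measurableSet_singleton g)
  have hcov := cov_sub_add_integral_mul_integral_sub
    (integrable_mul_condExp_cond_ind_of_indep hH hSH (hSs 1) (hSm 1) (hS0 1 (.inl rfl)) hG hτ)
    (integrable_mul_condExp_cond_ind_of_indep hH hSH (hSs 2) (hSm 2) (hS0 2 (.inr rfl)) hG hτ)
    (integrable_condExp_cond_of_indep hH hSH (hSs 1) (hSm 1) (hS0 1 (.inl rfl)))
    (integrable_condExp_cond_of_indep hH hSH (hSs 2) (hSm 2) (hS0 2 (.inr rfl)))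
  rw [integral_condExp_cond_ind_of_indep hH hSH (hSs 1) (hSm 1) (hS0 1 (.inl rfl)) hG,
    integral_condExp_cond_ind_of_indep hH hSH (hSs 2) (hSm 2) (hS0 2 (.inr rfl)) hG] at hcov
  simp only [hpg]
  exact hcov.symm

/-- **Bias decomposition for φ₂ (Theorem 2).**  Under the reference-population assumptions
(consistency, positivity, weak conditional exchangeability under `P(·|S=1)`) and the
transportability assumptions, `ψ − φ₂ = (ψ − φ₁) + T₃` where
`T₃ = Σ_g [Cov(τ(g), υ(g)) + E[τ(g)]·(P(G=g|S=1) − P(G=g|S=2))]`,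
`τ(g) = Y^(1,g) − Y^(0,g)`, `υ(g) = P(G=g|S=1,𝓗) − P(G=g|S=2,𝓗)`, and the covariance and
expectation in `T₃` are unconditional.  In particular `φ₁ − φ₂ = T₃`. -/
theorem bias_decomposition_phi2
    {Ω : Type*} [mΩ : MeasurableSpace Ω] [StandardBorelSpace Ω] [Nonempty Ω]
    (μ : Measure Ω) [IsProbabilityMeasure μ]
    (gmax : ℕ)
    (S A G : Ω → ℕ)
    (hS : ∀ ω, S ω = 1 ∨ S ω = 2) (hSmeas : Measurable S)
    (hSpos : ∀ s, (s = 1 ∨ s = 2) → 0 < μ {ω | S ω = s})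
    (hA : ∀ ω, A ω ≤ 1) (hG : ∀ ω, G ω ≤ gmax)
    (hAmeas : Measurable A) (hGmeas : Measurable G)
    (Ypo : ℕ → ℕ → Ω → ℝ)
    (hYpomeas : ∀ a ≤ 1, ∀ g ≤ gmax, Measurable (Ypo a g))
    (hYposq : ∀ a ≤ 1, ∀ g ≤ gmax, MemLp (Ypo a g) 2 μ)
    (Ya : ℕ → Ω → ℝ)
    (hYa : ∀ a ω, Ya a ω = ∑ g ∈ Finset.range (gmax + 1), ind {ω' | G ω' = g} ω * Ypo a g ω)
    (Y : Ω → ℝ)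
    (hY : ∀ ω, Y ω = ind {ω' | A ω' = 1} ω * Ya 1 ω + ind {ω' | A ω' = 0} ω * Ya 0 ω)
    -- transportability assumptions
    (mH : MeasurableSpace Ω) (hH : mH ≤ mΩ)
    (pg : ℕ → ℕ → Ω → ℝ)
    (hpg : ∀ s g, pg s g = (μ[|{ω | S ω = s}])[ind {ω | G ω = g} | mH])
    (hpgbdd : ∀ s g, ∀ᵐ ω ∂μ, 0 ≤ pg s g ω ∧ pg s g ω ≤ 1)
    (hpgmeas : ∀ s g, Measurable[mH] (pg s g))
    (htrans : ∀ a ≤ 1, ∀ g ≤ gmax,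
      CondIndepFun mH hH (Ypo a g) (fun ω => (S ω, G ω)) μ)
    (hSH : Indep (MeasurableSpace.comap S inferInstance) mH μ)
    -- reference-population assumptions, under P₁ = μ[|{S=1}]
    (mG mF : MeasurableSpace Ω) (hGF : mG ≤ mF) (hF : mF ≤ mΩ)
    (π e ε : ℕ → Ω → ℝ)
    (hπ : ∀ a, π a = (μ[|{ω | S ω = 1}])[ind {ω | A ω = a} | mF])
    (he : ∀ a, e a = (μ[|{ω | S ω = 1}])[ind {ω | A ω = a} | mG])
    (hπpos : ∀ a ≤ 1, ∀ᵐ ω ∂(μ[|{ω | S ω = 1}]), 0 < π a ω)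
    (hepos : ∀ a ≤ 1, ∀ᵐ ω ∂(μ[|{ω | S ω = 1}]), 0 < e a ω)
    (hexch : ∀ a ≤ 1, CondIndepFun mF hF (Ya a) A (μ[|{ω | S ω = 1}]))
    (hε : ∀ a ω, ε a ω = π a ω / e a ω)
    (hεint : ∀ a ≤ 1, Integrable (ε a) (μ[|{ω | S ω = 1}]))
    (hεYint : ∀ a ≤ 1, Integrable (fun ω => Ya a ω * ε a ω) (μ[|{ω | S ω = 1}]))
    (hεY0int : ∀ a ≤ 1, Integrable (fun ω => Ypo a 0 ω * ε a ω) (μ[|{ω | S ω = 1}]))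
    (hwint : ∀ a ≤ 1,
      Integrable (fun ω => ind {ω' | A ω' = a} ω * Y ω / e a ω) (μ[|{ω | S ω = 1}])) :
    -- with ψ the naive functional, φ₁ and φ₂ the natural average main effects:
    (((∫ ω, ind {ω' | A ω' = 1} ω * Y ω / e 1 ω ∂(μ[|{ω | S ω = 1}]))
        - ∫ ω, ind {ω' | A ω' = 0} ω * Y ω / e 0 ω ∂(μ[|{ω | S ω = 1}]))
      - ∫ ω, (Ya 1 ω - Ya 0 ω) ∂(μ[|{ω | S ω = 2}])
    = (((∫ ω, ind {ω' | A ω' = 1} ω * Y ω / e 1 ω ∂(μ[|{ω | S ω = 1}]))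
        - ∫ ω, ind {ω' | A ω' = 0} ω * Y ω / e 0 ω ∂(μ[|{ω | S ω = 1}]))
      - ∫ ω, (Ya 1 ω - Ya 0 ω) ∂(μ[|{ω | S ω = 1}]))
      + ∑ g ∈ Finset.range (gmax + 1),
          (cov μ (fun ω => Ypo 1 g ω - Ypo 0 g ω) (fun ω => pg 1 g ω - pg 2 g ω)
            + (∫ ω, (Ypo 1 g ω - Ypo 0 g ω) ∂μ)
                * (((μ[|{ω | S ω = 1}]) {ω | G ω = g}).toReal
                    - ((μ[|{ω | S ω = 2}]) {ω | G ω = g}).toReal)))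
    ∧ (∫ ω, (Ya 1 ω - Ya 0 ω) ∂(μ[|{ω | S ω = 1}]))
        - ∫ ω, (Ya 1 ω - Ya 0 ω) ∂(μ[|{ω | S ω = 2}])
      = ∑ g ∈ Finset.range (gmax + 1),
          (cov μ (fun ω => Ypo 1 g ω - Ypo 0 g ω) (fun ω => pg 1 g ω - pg 2 g ω)
            + (∫ ω, (Ypo 1 g ω - Ypo 0 g ω) ∂μ)
                * (((μ[|{ω | S ω = 1}]) {ω | G ω = g}).toReal
                    - ((μ[|{ω | S ω = 2}]) {ω | G ω = g}).toReal)) :=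
  bias_decomposition_phi2_general (mΩ := mΩ) μ gmax S A G hSmeas hSpos hGmeas Ypo hYpomeas hYposq Ya
    hYa Y mH hH pg hpg htrans hSH e
end
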